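/- arXiv:2306.05299 — 2 statements merged into one kernel-verified Lean document; each statement's English description precedes it below -/
import Mathlib

section
/- Under the stated assumptions, the second moment of the autoregressive coefficient is identified from the first three autocorrelations of first differences: E(φ²) = (1 + 2ρ₁ + 2ρ₂ + ρ₃)/(1 + ρ₁). -/
/-!
Write `g = 1/(1+φ)` and `cₖ = E[(1-φ)/(1+φ) φᵏ]`, so that `ρ_h = -c_{h-1} / (2E g)`. Since
`(1-φ)/(1+φ) = 2g - 1`, `c₀ = 2E g - 1` and hence `1 + ρ₁ = 1/(2E g)`. The identity
`2 - (1-x)(2 + 2x + x²) = x²(1+x)`, i.e. `x² = 2/(1+x) - (1-x)/(1+x) · (2 + 2x + x²)`, gives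
`E φ² = 2E g - 2c₀ - 2c₁ - c₂` after taking expectations, and the two facts combine to the formula.
-/

open MeasureTheory Set

noncomputable section

variable {Ω : Type*} [MeasurableSpace Ω] {P : Measure Ω}

theorem integrable_comp_of_ae_mem_isCompact [IsFiniteMeasure P] {α : Type*} [TopologicalSpace α]
    [MeasurableSpace α] {φ : Ω → α} {ψ : α → ℝ} {s : Set α} (hs : IsCompact s)
    (hψs : ContinuousOn ψ s) (hψ : Measurable ψ) (hφ : Measurable φ) (hφs : ∀ᵐ ω ∂P, φ ω ∈ s) :
    Integrable (fun ω => ψ (φ ω)) P := by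
  obtain ⟨C, hC⟩ := hs.exists_bound_of_continuousOn hψs
  exact .of_bound (hψ.comp hφ).aestronglyMeasurable C (hφs.mono fun ω hω => hC _ hω)

theorem sq_eq_two_div_one_add_sub (x : ℝ) (hx : 1 + x ≠ 0) :
    x ^ 2 = 2 * (1 / (1 + x)) - 2 * ((1 - x) / (1 + x)) - 2 * ((1 - x) / (1 + x) * x)
      - (1 - x) / (1 + x) * x ^ 2 := by
  field_simp
  ring

/-- The paper's `ρ_h`, meaningful for `h ≥ 1` (at `h = 0` the exponent `h - 1` truncates to `0`). -/
def diffAutocorr (P : Measure Ω) (φ : Ω → ℝ) (h : ℕ) : ℝ :=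
  -(∫ ω, ((1 - φ ω) / (1 + φ ω)) * φ ω ^ (h - 1) ∂P) / (2 * ∫ ω, 1 / (1 + φ ω) ∂P)

section Bounded

variable [IsProbabilityMeasure P] {φ : Ω → ℝ} {ε : ℝ}

theorem integrable_one_div_one_add (hε : 0 < ε) (hφ : Measurable φ)
    (hφs : ∀ᵐ ω ∂P, φ ω ∈ Icc (-1 + ε) 1) : Integrable (fun ω => 1 / (1 + φ ω)) P := by
  refine integrable_comp_of_ae_mem_isCompact (ψ := fun x => 1 / (1 + x)) isCompact_Icc ?_
    (by fun_prop) hφ hφs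
  exact continuousOn_const.div (by fun_prop) fun x hx => by linarith [hx.1]

theorem integrable_one_sub_div_one_add_mul_pow (hε : 0 < ε) (hφ : Measurable φ)
    (hφs : ∀ᵐ ω ∂P, φ ω ∈ Icc (-1 + ε) 1) (k : ℕ) :
    Integrable (fun ω => (1 - φ ω) / (1 + φ ω) * φ ω ^ k) P := by
  refine integrable_comp_of_ae_mem_isCompact (ψ := fun x => (1 - x) / (1 + x) * x ^ k)
    isCompact_Icc ?_ (by fun_prop) hφ hφs
  exact ((continuousOn_const.sub continuousOn_id).div (by fun_prop) fun x hx => by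
    linarith [hx.1]).mul (by fun_prop)

theorem one_half_le_integral_one_div_one_add (hφs : ∀ᵐ ω ∂P, φ ω ∈ Ioc (-1) 1)
    (hint : Integrable (fun ω => 1 / (1 + φ ω)) P) : 1 / 2 ≤ ∫ ω, 1 / (1 + φ ω) ∂P := by
  have := integral_mono_ae (integrable_const (1 / 2 : ℝ)) hint <| hφs.mono fun ω hω => by
    rw [div_le_div_iff₀ two_pos (by linarith [hω.1])]
    linarith [hω.2]
  simpa using this

theorem integral_one_sub_div_one_add (hε : 0 < ε) (hφ : Measurable φ)
    (hφs : ∀ᵐ ω ∂P, φ ω ∈ Icc (-1 + ε) 1) :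
    ∫ ω, (1 - φ ω) / (1 + φ ω) ∂P = 2 * ∫ ω, 1 / (1 + φ ω) ∂P - 1 := by
  have hpt : ∀ᵐ ω ∂P, (1 - φ ω) / (1 + φ ω) = 2 * (1 / (1 + φ ω)) - 1 :=
    hφs.mono fun ω hω => by
      field_simp [show 1 + φ ω ≠ 0 by linarith [hω.1]]
      ring
  rw [integral_congr_ae hpt,
    integral_sub ((integrable_one_div_one_add hε hφ hφs).const_mul 2) (integrable_const 1),
    integral_const_mul]
  simp

theorem integral_sq_eq_two_integral_one_div_one_add_sub (hε : 0 < ε) (hφ : Measurable φ)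
    (hφs : ∀ᵐ ω ∂P, φ ω ∈ Icc (-1 + ε) 1) :
    ∫ ω, φ ω ^ 2 ∂P = 2 * ∫ ω, 1 / (1 + φ ω) ∂P - 2 * ∫ ω, (1 - φ ω) / (1 + φ ω) ∂P
      - 2 * ∫ ω, (1 - φ ω) / (1 + φ ω) * φ ω ∂P - ∫ ω, (1 - φ ω) / (1 + φ ω) * φ ω ^ 2 ∂P := by
  have hpt := hφs.mono fun ω hω => sq_eq_two_div_one_add_sub (φ ω) (by linarith [hω.1])
  have hg := integrable_one_div_one_add hε hφ hφs
  have hf := integrable_one_sub_div_one_add_mul_pow hε hφ hφs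
  have hf₀ : Integrable (fun ω => (1 - φ ω) / (1 + φ ω)) P := by simpa using hf 0
  have hf₁ : Integrable (fun ω => (1 - φ ω) / (1 + φ ω) * φ ω) P := by simpa using hf 1
  rw [integral_congr_ae hpt, integral_sub, integral_sub, integral_sub, integral_const_mul,
    integral_const_mul, integral_const_mul]
  all_goals fun_prop

theorem integral_sq_eq_diffAutocorr (hε : 0 < ε) (hφ : Measurable φ)
    (hφs : ∀ᵐ ω ∂P, φ ω ∈ Icc (-1 + ε) 1) :
    ∫ ω, φ ω ^ 2 ∂P = (1 + 2 * diffAutocorr P φ 1 + 2 * diffAutocorr P φ 2 + diffAutocorr P φ 3)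
      / (1 + diffAutocorr P φ 1) := by
  have hD : ∫ ω, 1 / (1 + φ ω) ∂P ≠ 0 := (one_half_pos.trans_le <|
    one_half_le_integral_one_div_one_add (hφs.mono fun ω hω => ⟨by linarith [hω.1], hω.2⟩)
      (integrable_one_div_one_add hε hφ hφs)).ne'
  simp only [diffAutocorr, Nat.sub_self, Nat.add_one_sub_one, pow_zero, mul_one, pow_one]
  rw [integral_sq_eq_two_integral_one_div_one_add_sub hε hφ hφs, integral_one_sub_div_one_add hε hφ hφs]
  field_simp
  ring

end Bounded

end

/-- The second moment of the autoregressive coefficient is identified from the first three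
autocorrelations of first differences: `E(φ²) = (1 + 2ρ₁ + 2ρ₂ + ρ₃)/(1 + ρ₁)`. -/
theorem second_moment_identified
    {Ω : Type*} [MeasurableSpace Ω] (P : Measure Ω) [IsProbabilityMeasure P]
    (φ : Ω → ℝ) (hφm : Measurable φ) (ε₀ : ℝ) (hε₀ : 0 < ε₀)
    (hφbd : ∀ᵐ ω ∂P, -1 + ε₀ ≤ φ ω ∧ φ ω ≤ 1)
    (ρ : ℕ → ℝ)
    (hρ : ∀ h : ℕ, 1 ≤ h → ρ h =
      -(∫ ω, ((1 - φ ω) / (1 + φ ω)) * φ ω ^ (h - 1) ∂P) /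
        (2 * ∫ ω, 1 / (1 + φ ω) ∂P)) :
    ∫ ω, (φ ω) ^ 2 ∂P = (1 + 2 * ρ 1 + 2 * ρ 2 + ρ 3) / (1 + ρ 1) := by
  rw [hρ 1 le_rfl, hρ 2 (by norm_num), hρ 3 (by norm_num)]
  exact integral_sq_eq_diffAutocorr hε₀ hφm hφbd
end

section
/- (Moment condition underlying the HetroGMM estimator of the first moment) Under the stated assumptions, for every t ∈ ℤ, E(φ) · (E((Δy_t)²) + E(Δy_t Δy_{t−1})) = E((Δy_t)²) + 2 E(Δy_t Δy_{t−1}) + E(Δy_t Δy_{t−2}). -/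
/-!
Write `Δy_t = σ ∑ₗ bₗ(φ) ε_{t-ℓ}` with `b₀ = 1` and `b_{ℓ+1} = -(1 - φ) φ^ℓ`. Since `(φ, σ)` is
independent of the orthonormal errors, the truncation after lag `M` has lag-`d` autocovariance
`E[σ² ∑ₖ b_{k+d}(φ) bₖ(φ)]`, and these converge to `E(Δy_t Δy_{t-d})` because the truncations
converge in `L²`. For the truncated coefficients, `γ₀ + γ₁` and `γ₀ + 2γ₁ + γ₂` are `1` and `φ`
up to remainders of the form `(1 - φ) φⁿ`, which tend to `0` by dominated convergence since
`-1 < φ ≤ 1`. So the two sides of the identity are `E(φ) E(σ²)` and `E(σ² φ)`, which agree because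
`φ` and `σ` are independent.
-/

open MeasureTheory ProbabilityTheory Filter

/-- Index type for the joint independence assumption: `none` indexes the pair of
random coefficients `(φ, σ)` and `some ℓ` indexes the standardized error `ε_ℓ`. -/
abbrev HetAR1.Codomain : Option ℤ → Type
  | none => ℝ × ℝ
  | some _ => ℝ

instance HetAR1.instMeasurableSpaceCodomain : ∀ i, MeasurableSpace (HetAR1.Codomain i)
  | none => inferInstanceAs (MeasurableSpace (ℝ × ℝ))
  | some _ => inferInstanceAs (MeasurableSpace ℝ)

/-- The family consisting of the pair `(φ, σ)` together with all the errors `ε_ℓ`. -/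
def HetAR1.family {Ω : Type*} (φ σ : Ω → ℝ) (ε : ℤ → Ω → ℝ) :
    ∀ i : Option ℤ, Ω → HetAR1.Codomain i
  | none => fun ω => (φ ω, σ ω)
  | some ℓ => ε ℓ

open Finset Topology

lemma abs_one_sub_mul_pow_le_two {x : ℝ} (hx : |x| ≤ 1) (n : ℕ) : |(1 - x) * x ^ n| ≤ 2 := by
  have h₁ : |1 - x| ≤ 2 := abs_le.2 ⟨by linarith [(abs_le.1 hx).2], by linarith [(abs_le.1 hx).1]⟩
  calc |(1 - x) * x ^ n| = |1 - x| * |x| ^ n := by rw [abs_mul, abs_pow]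
    _ ≤ 2 * 1 := by gcongr; exact pow_le_one₀ (abs_nonneg x) hx
    _ = 2 := mul_one 2

lemma tendsto_one_sub_mul_pow_atTop {x : ℝ} (h₁ : -1 < x) (h₂ : x ≤ 1) :
    Tendsto (fun n : ℕ => (1 - x) * x ^ n) atTop (𝓝 0) := by
  rcases h₂.eq_or_lt with rfl | hlt
  · simp
  · simpa using (tendsto_pow_atTop_nhds_zero_of_abs_lt_one (abs_lt.2 ⟨h₁, hlt⟩)).const_mul (1 - x)

lemma tendsto_two_mul_add_atTop (c : ℕ) : Tendsto (fun N : ℕ => 2 * N + c) atTop atTop :=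
  tendsto_atTop_mono (fun N => by simp only [id]; omega) tendsto_id

lemma sum_range_sum_range_ite_eq_add {R : Type*} [AddCommMonoid R] (f : ℕ → ℕ → R) (M d : ℕ) :
    ∑ ℓ ∈ range (M + 1), ∑ k ∈ range (M + 1), (if ℓ = k + d then f ℓ k else 0)
      = ∑ k ∈ range (M + 1 - d), f (k + d) k := by
  rw [sum_comm]
  simp only [sum_ite_eq', ← sum_filter]
  congr 1
  ext k
  simp only [mem_filter, mem_range]
  omega

section Integrals

variable {Ω : Type*} [MeasurableSpace Ω] {P : Measure Ω}

lemma tendsto_integral_mul_of_tendsto_eLpNorm {ι : Type*} {l : Filter ι} {X Y : Ω → ℝ}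
    {Xn Yn : ι → Ω → ℝ} (hX : MemLp X 2 P) (hY : MemLp Y 2 P)
    (hXn : ∀ n, MemLp (Xn n) 2 P) (hYn : ∀ n, MemLp (Yn n) 2 P)
    (hXc : Tendsto (fun n => eLpNorm (fun ω => Xn n ω - X ω) 2 P) l (𝓝 0))
    (hYc : Tendsto (fun n => eLpNorm (fun ω => Yn n ω - Y ω) 2 P) l (𝓝 0)) :
    Tendsto (fun n => ∫ ω, Xn n ω * Yn n ω ∂P) l (𝓝 (∫ ω, X ω * Y ω ∂P)) := by
  have inner_toLp : ∀ {f g : Ω → ℝ} (hf : MemLp f 2 P) (hg : MemLp g 2 P),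
      inner ℝ (hf.toLp f) (hg.toLp g) = ∫ ω, f ω * g ω ∂P := fun hf hg => by
    rw [L2.inner_def]
    refine integral_congr_ae ?_
    filter_upwards [hf.coeFn_toLp, hg.coeFn_toLp] with ω hfω hgω
    simp [hfω, hgω, mul_comm]
  have hXL := (Lp.tendsto_Lp_iff_tendsto_eLpNorm'' Xn hXn X hX).2 hXc
  have hYL := (Lp.tendsto_Lp_iff_tendsto_eLpNorm'' Yn hYn Y hY).2 hYc
  simpa only [inner_toLp] using hXL.inner (𝕜 := ℝ) hYL

lemma tendsto_integral_mul_of_tendsto_of_abs_le {g f : Ω → ℝ} {F : ℕ → Ω → ℝ} {C : ℝ}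
    (hg : Integrable g P) (hF : ∀ n, AEStronglyMeasurable (F n) P)
    (hbound : ∀ n, ∀ᵐ ω ∂P, |F n ω| ≤ C)
    (hlim : ∀ᵐ ω ∂P, Tendsto (fun n => F n ω) atTop (𝓝 (f ω))) :
    Tendsto (fun n => ∫ ω, g ω * F n ω ∂P) atTop (𝓝 (∫ ω, g ω * f ω ∂P)) := by
  refine tendsto_integral_of_dominated_convergence (fun ω => |g ω| * C)
    (fun n => hg.1.mul (hF n)) (hg.abs.mul_const C) (fun n => ?_) ?_
  · filter_upwards [hbound n] with ω hω
    rw [norm_mul, Real.norm_eq_abs, Real.norm_eq_abs]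
    exact mul_le_mul_of_nonneg_left hω (abs_nonneg _)
  · filter_upwards [hlim] with ω hω
    exact hω.const_mul (g ω)

end Integrals

namespace HetAR1

/-- `Δy_t = σ ∑ₗ maCoeff φ ℓ * ε_{t-ℓ}`. -/
def maCoeff (x : ℝ) : ℕ → ℝ
  | 0 => 1
  | ℓ + 1 => -((1 - x) * x ^ ℓ)

@[fun_prop]
lemma measurable_maCoeff (ℓ : ℕ) : Measurable fun x => maCoeff x ℓ := by
  cases ℓ <;> simp only [maCoeff] <;> fun_prop

lemma abs_maCoeff_le_two {x : ℝ} (hx : |x| ≤ 1) : ∀ ℓ, |maCoeff x ℓ| ≤ 2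
  | 0 => by norm_num [maCoeff]
  | ℓ + 1 => by rw [maCoeff, abs_neg]; exact abs_one_sub_mul_pow_le_two hx ℓ

/-- Lag-`d` autocovariance of the coefficients `maCoeff x 0, …, maCoeff x M`. -/
def lagSum (x : ℝ) (M d : ℕ) : ℝ := ∑ k ∈ range (M + 1 - d), maCoeff x (k + d) * maCoeff x k

lemma lagSum_succ (x : ℝ) {M d : ℕ} (hd : d ≤ M + 1) :
    lagSum x (M + 1) d = lagSum x M d + maCoeff x (M + 1) * maCoeff x (M + 1 - d) := by
  rw [lagSum, lagSum, show M + 1 + 1 - d = M + 1 - d + 1 by omega, sum_range_succ,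
    show M + 1 - d + d = M + 1 by omega]

lemma lagSum_zero_add_lagSum_one (x : ℝ) (N : ℕ) :
    lagSum x (N + 2) 0 + lagSum x (N + 2) 1 = 1 - (1 - x) * x ^ (2 * N + 3) := by
  induction N with
  | zero =>
    simp only [lagSum, sum_range_succ, sum_range_zero, maCoeff, Nat.reduceAdd, Nat.reduceSub]
    ring
  | succ N ih =>
    rw [lagSum_succ x (M := N + 2) (d := 0) (by omega),
      lagSum_succ x (M := N + 2) (d := 1) (by omega)]
    simp only [Nat.add_sub_cancel, Nat.sub_zero, maCoeff]
    linear_combination ih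

lemma lagSum_zero_add_two_mul_lagSum_one_add_lagSum_two (x : ℝ) (N : ℕ) :
    lagSum x (N + 2) 0 + 2 * lagSum x (N + 2) 1 + lagSum x (N + 2) 2
      = x - (1 + x) * ((1 - x) * x ^ (2 * N + 2)) := by
  induction N with
  | zero =>
    simp only [lagSum, sum_range_succ, sum_range_zero, maCoeff, Nat.reduceAdd, Nat.reduceSub]
    ring
  | succ N ih =>
    rw [lagSum_succ x (M := N + 2) (d := 0) (by omega),
      lagSum_succ x (M := N + 2) (d := 1) (by omega),
      lagSum_succ x (M := N + 2) (d := 2) (by omega)]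
    simp only [Nat.add_sub_cancel, Nat.sub_zero, show N + 2 + 1 - 2 = N + 1 by omega, maCoeff]
    linear_combination ih

def truncDiff {Ω : Type*} (φ σ : Ω → ℝ) (ε : ℤ → Ω → ℝ) (s : ℤ) (M : ℕ) (ω : Ω) : ℝ :=
  ∑ ℓ ∈ range (M + 1), σ ω * maCoeff (φ ω) ℓ * ε (s - ℓ) ω

lemma truncDiff_eq {Ω : Type*} {φ σ : Ω → ℝ} {ε : ℤ → Ω → ℝ} (s : ℤ) (M : ℕ) (ω : Ω) :
    truncDiff φ σ ε s M ω = σ ω * (ε s ω -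
      (1 - φ ω) * ∑ ℓ ∈ range M, φ ω ^ ℓ * ε (s - ((ℓ : ℤ) + 1)) ω) := by
  have hterm : ∀ ℓ ∈ range M, σ ω * maCoeff (φ ω) (ℓ + 1) * ε (s - ↑(ℓ + 1)) ω
      = -(σ ω * (1 - φ ω) * (φ ω ^ ℓ * ε (s - (ℓ + 1)) ω)) := fun ℓ _ => by
    simp only [maCoeff]
    push_cast
    ring
  rw [truncDiff, sum_range_succ', sum_congr rfl hterm, sum_neg_distrib, ← mul_sum]
  simp only [maCoeff, Nat.cast_zero, sub_zero]
  ring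

variable {Ω : Type*} [MeasurableSpace Ω] {P : Measure Ω} {φ σ : Ω → ℝ} {ε : ℤ → Ω → ℝ}

lemma integral_error_mul_error (hindep : iIndepFun (family φ σ ε) P)
    (hε : ∀ ℓ, AEStronglyMeasurable (ε ℓ) P) (hεmean : ∀ ℓ, ∫ ω, ε ℓ ω ∂P = 0)
    (hεvar : ∀ ℓ, ∫ ω, ε ℓ ω ^ 2 ∂P = 1) (i j : ℤ) :
    ∫ ω, ε i ω * ε j ω ∂P = if i = j then 1 else 0 := by
  split_ifs with hij
  · subst hij
    simpa only [sq] using hεvar i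
  · have hindep_ij : IndepFun (ε i) (ε j) P :=
      hindep.indepFun (i := some i) (j := some j) (by simpa)
    rw [hindep_ij.integral_fun_mul_eq_mul_integral (hε i) (hε j), hεmean i, zero_mul]

lemma indepFun_coeffs_errors (hindep : iIndepFun (family φ σ ε) P) (hφ : Measurable φ)
    (hσ : Measurable σ) (hε : ∀ ℓ, AEMeasurable (ε ℓ) P) (i j : ℤ) :
    IndepFun (fun ω => (φ ω, σ ω)) (fun ω => (ε i ω, ε j ω)) P := by
  have hfam : ∀ k, AEMeasurable (family φ σ ε k) P
    | none => (hφ.prodMk hσ).aemeasurable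
    | some ℓ => hε ℓ
  exact (hindep.indepFun_prodMk₀ hfam (some i) (some j) none (by simp) (by simp)).symm

lemma integral_coeff_mul_error_mul_error {g : ℝ × ℝ → ℝ} (hg : Measurable g)
    (hindep : iIndepFun (family φ σ ε) P) (hφ : Measurable φ) (hσ : Measurable σ)
    (hε : ∀ ℓ, AEStronglyMeasurable (ε ℓ) P) (hεmean : ∀ ℓ, ∫ ω, ε ℓ ω ∂P = 0)
    (hεvar : ∀ ℓ, ∫ ω, ε ℓ ω ^ 2 ∂P = 1) (i j : ℤ) :
    ∫ ω, g (φ ω, σ ω) * (ε i ω * ε j ω) ∂P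
      = (∫ ω, g (φ ω, σ ω) ∂P) * if i = j then 1 else 0 := by
  have hindep_ij := (indepFun_coeffs_errors hindep hφ hσ (fun ℓ => (hε ℓ).aemeasurable) i j).comp
    hg (measurable_fst.mul measurable_snd)
  rw [← integral_error_mul_error hindep hε hεmean hεvar]
  exact hindep_ij.integral_fun_mul_eq_mul_integral
    (hg.comp (hφ.prodMk hσ)).aestronglyMeasurable ((hε i).mul (hε j))

lemma integrable_coeff_mul_error_mul_error {g : ℝ × ℝ → ℝ} (hg : Measurable g)
    (hgi : Integrable (fun ω => g (φ ω, σ ω)) P)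
    (hindep : iIndepFun (family φ σ ε) P) (hφ : Measurable φ) (hσ : Measurable σ)
    (hε2 : ∀ ℓ, MemLp (ε ℓ) 2 P) (i j : ℤ) :
    Integrable (fun ω => g (φ ω, σ ω) * (ε i ω * ε j ω)) P :=
  ((indepFun_coeffs_errors hindep hφ hσ (fun ℓ => (hε2 ℓ).1.aemeasurable) i j).comp
    hg (measurable_fst.mul measurable_snd)).integrable_mul hgi
    (by exact (hε2 i).integrable_mul (hε2 j))

lemma integrable_sq_mul_maCoeff_mul_maCoeff (hσ2 : Integrable (fun ω => σ ω ^ 2) P)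
    (hφ : Measurable φ) (hφ1 : ∀ᵐ ω ∂P, |φ ω| ≤ 1) (ℓ k : ℕ) :
    Integrable (fun ω => σ ω ^ 2 * (maCoeff (φ ω) ℓ * maCoeff (φ ω) k)) P := by
  refine hσ2.mul_bdd (c := 2 * 2) (by fun_prop) ?_
  filter_upwards [hφ1] with ω hω
  rw [norm_mul, Real.norm_eq_abs, Real.norm_eq_abs]
  exact mul_le_mul (abs_maCoeff_le_two hω ℓ) (abs_maCoeff_le_two hω k) (abs_nonneg _) zero_le_two

lemma integrable_sq_mul_lagSum (hσ2 : Integrable (fun ω => σ ω ^ 2) P)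
    (hφ : Measurable φ) (hφ1 : ∀ᵐ ω ∂P, |φ ω| ≤ 1) (M d : ℕ) :
    Integrable (fun ω => σ ω ^ 2 * lagSum (φ ω) M d) P := by
  simp only [lagSum, mul_sum]
  exact integrable_finsetSum _ fun k _ => integrable_sq_mul_maCoeff_mul_maCoeff hσ2 hφ hφ1 _ _

lemma integrable_truncDiff_summand_mul_summand (hindep : iIndepFun (family φ σ ε) P)
    (hφ : Measurable φ) (hσ : Measurable σ) (hφ1 : ∀ᵐ ω ∂P, |φ ω| ≤ 1)
    (hσ2 : Integrable (fun ω => σ ω ^ 2) P) (hε2 : ∀ ℓ, MemLp (ε ℓ) 2 P) (ℓ k : ℕ) (i j : ℤ) :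
    Integrable (fun ω => σ ω * maCoeff (φ ω) ℓ * ε i ω * (σ ω * maCoeff (φ ω) k * ε j ω)) P := by
  convert integrable_coeff_mul_error_mul_error (g := fun p => p.2 ^ 2 * (maCoeff p.1 ℓ * maCoeff p.1 k))
    (by fun_prop) (integrable_sq_mul_maCoeff_mul_maCoeff hσ2 hφ hφ1 ℓ k) hindep hφ hσ hε2 i j
    using 2 with ω
  ring

lemma memLp_truncDiff (hindep : iIndepFun (family φ σ ε) P)
    (hφ : Measurable φ) (hσ : Measurable σ) (hφ1 : ∀ᵐ ω ∂P, |φ ω| ≤ 1)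
    (hσ2 : Integrable (fun ω => σ ω ^ 2) P) (hε2 : ∀ ℓ, MemLp (ε ℓ) 2 P) (s : ℤ) (M : ℕ) :
    MemLp (truncDiff φ σ ε s M) 2 P := by
  refine memLp_finsetSum (f := fun ℓ ω => σ ω * maCoeff (φ ω) ℓ * ε (s - ℓ) ω) _ fun ℓ _ => ?_
  refine (memLp_two_iff_integrable_sq ?_).2 ?_
  · exact (hσ.mul ((measurable_maCoeff ℓ).comp hφ)).aestronglyMeasurable.mul (hε2 _).1
  · simpa only [sq] using
      integrable_truncDiff_summand_mul_summand hindep hφ hσ hφ1 hσ2 hε2 ℓ ℓ (s - ℓ) (s - ℓ)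

theorem integral_truncDiff_mul_truncDiff (hindep : iIndepFun (family φ σ ε) P)
    (hφ : Measurable φ) (hσ : Measurable σ) (hφ1 : ∀ᵐ ω ∂P, |φ ω| ≤ 1)
    (hσ2 : Integrable (fun ω => σ ω ^ 2) P) (hε2 : ∀ ℓ, MemLp (ε ℓ) 2 P)
    (hεmean : ∀ ℓ, ∫ ω, ε ℓ ω ∂P = 0) (hεvar : ∀ ℓ, ∫ ω, ε ℓ ω ^ 2 ∂P = 1)
    (t : ℤ) (M d : ℕ) :
    ∫ ω, truncDiff φ σ ε t M ω * truncDiff φ σ ε (t - d) M ω ∂P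
      = ∫ ω, σ ω ^ 2 * lagSum (φ ω) M d ∂P := by
  have hterm : ∀ ℓ k : ℕ,
      ∫ ω, σ ω * maCoeff (φ ω) ℓ * ε (t - ℓ) ω * (σ ω * maCoeff (φ ω) k * ε (t - d - k) ω) ∂P
        = if ℓ = k + d then ∫ ω, σ ω ^ 2 * (maCoeff (φ ω) ℓ * maCoeff (φ ω) k) ∂P else 0 := by
    intro ℓ k
    have h := integral_coeff_mul_error_mul_error
      (g := fun p => p.2 ^ 2 * (maCoeff p.1 ℓ * maCoeff p.1 k)) (by fun_prop)
      hindep hφ hσ (fun ℓ => (hε2 ℓ).1) hεmean hεvar (t - ℓ) (t - d - k)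
    simp only [show t - ℓ = t - d - k ↔ ℓ = k + d by omega, mul_ite, mul_one, mul_zero] at h
    rw [← h]
    exact integral_congr_ae (Eventually.of_forall fun ω => by ring)
  have hint := integrable_truncDiff_summand_mul_summand hindep hφ hσ hφ1 hσ2 hε2
  calc ∫ ω, truncDiff φ σ ε t M ω * truncDiff φ σ ε (t - d) M ω ∂P
      = ∫ ω, ∑ ℓ ∈ range (M + 1), ∑ k ∈ range (M + 1),
          σ ω * maCoeff (φ ω) ℓ * ε (t - ℓ) ω * (σ ω * maCoeff (φ ω) k * ε (t - d - k) ω) ∂P := by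
        simp only [truncDiff, sum_mul_sum]
    _ = ∑ ℓ ∈ range (M + 1), ∑ k ∈ range (M + 1),
          if ℓ = k + d then ∫ ω, σ ω ^ 2 * (maCoeff (φ ω) ℓ * maCoeff (φ ω) k) ∂P else 0 := by
        rw [integral_finsetSum _ fun ℓ _ => integrable_finsetSum _ fun k _ => hint ℓ k _ _]
        refine sum_congr rfl fun ℓ _ => ?_
        rw [integral_finsetSum _ fun k _ => hint ℓ k _ _]
        exact sum_congr rfl fun k _ => hterm ℓ k
    _ = ∫ ω, σ ω ^ 2 * lagSum (φ ω) M d ∂P := by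
        rw [sum_range_sum_range_ite_eq_add, ← integral_finsetSum _ fun k _ =>
          integrable_sq_mul_maCoeff_mul_maCoeff hσ2 hφ hφ1 _ _]
        simp only [lagSum, mul_sum]

lemma tendsto_integral_lag_zero_add_lag_one (hσ2 : Integrable (fun ω => σ ω ^ 2) P)
    (hφ : Measurable φ) (hφ1 : ∀ᵐ ω ∂P, -1 < φ ω ∧ φ ω ≤ 1) :
    Tendsto (fun N : ℕ => (∫ ω, σ ω ^ 2 * lagSum (φ ω) (N + 2) 0 ∂P)
        + ∫ ω, σ ω ^ 2 * lagSum (φ ω) (N + 2) 1 ∂P) atTop (𝓝 (∫ ω, σ ω ^ 2 ∂P)) := by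
  have habs : ∀ᵐ ω ∂P, |φ ω| ≤ 1 := hφ1.mono fun ω h => abs_le.2 ⟨h.1.le, h.2⟩
  have hsum : ∀ N : ℕ, (∫ ω, σ ω ^ 2 * lagSum (φ ω) (N + 2) 0 ∂P)
      + ∫ ω, σ ω ^ 2 * lagSum (φ ω) (N + 2) 1 ∂P
        = ∫ ω, σ ω ^ 2 * (1 - (1 - φ ω) * φ ω ^ (2 * N + 3)) ∂P := fun N => by
    rw [← integral_add (integrable_sq_mul_lagSum hσ2 hφ habs _ 0)
      (integrable_sq_mul_lagSum hσ2 hφ habs _ 1)]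
    simp only [← mul_add, lagSum_zero_add_lagSum_one]
  simp only [hsum]
  simpa using tendsto_integral_mul_of_tendsto_of_abs_le (C := 1 + 2) (f := fun _ => 1) hσ2
    (fun N => by fun_prop)
    (fun N => habs.mono fun ω h =>
      (abs_sub _ _).trans (by rw [abs_one]; gcongr; exact abs_one_sub_mul_pow_le_two h _))
    (hφ1.mono fun ω h => by
      simpa using ((tendsto_one_sub_mul_pow_atTop h.1 h.2).comp
        (tendsto_two_mul_add_atTop 3)).const_sub 1)

lemma tendsto_integral_lag_zero_add_two_mul_lag_one_add_lag_two
    (hσ2 : Integrable (fun ω => σ ω ^ 2) P)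
    (hφ : Measurable φ) (hφ1 : ∀ᵐ ω ∂P, -1 < φ ω ∧ φ ω ≤ 1) :
    Tendsto (fun N : ℕ => (∫ ω, σ ω ^ 2 * lagSum (φ ω) (N + 2) 0 ∂P)
        + 2 * (∫ ω, σ ω ^ 2 * lagSum (φ ω) (N + 2) 1 ∂P)
        + ∫ ω, σ ω ^ 2 * lagSum (φ ω) (N + 2) 2 ∂P) atTop (𝓝 (∫ ω, σ ω ^ 2 * φ ω ∂P)) := by
  have habs : ∀ᵐ ω ∂P, |φ ω| ≤ 1 := hφ1.mono fun ω h => abs_le.2 ⟨h.1.le, h.2⟩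
  have hsum : ∀ N : ℕ, (∫ ω, σ ω ^ 2 * lagSum (φ ω) (N + 2) 0 ∂P)
      + 2 * (∫ ω, σ ω ^ 2 * lagSum (φ ω) (N + 2) 1 ∂P)
      + ∫ ω, σ ω ^ 2 * lagSum (φ ω) (N + 2) 2 ∂P
        = ∫ ω, σ ω ^ 2 * (φ ω - (1 + φ ω) * ((1 - φ ω) * φ ω ^ (2 * N + 2))) ∂P := fun N => by
    have hint := integrable_sq_mul_lagSum hσ2 hφ habs (N + 2)
    rw [← integral_const_mul, ← integral_add (hint 0) ((hint 1).const_mul 2),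
      ← integral_add (by exact (hint 0).add ((hint 1).const_mul 2)) (hint 2)]
    simp only [← lagSum_zero_add_two_mul_lagSum_one_add_lagSum_two]
    congr with ω
    ring
  simp only [hsum]
  refine tendsto_integral_mul_of_tendsto_of_abs_le (C := 1 + 2 * 2) hσ2 (fun N => by fun_prop)
    (fun N => habs.mono fun ω h => (abs_sub _ _).trans ?_) ?_
  · rw [abs_mul]
    gcongr
    · exact (abs_add_le _ _).trans (by rw [abs_one]; linarith)
    · exact abs_one_sub_mul_pow_le_two h _
  · filter_upwards [hφ1] with ω h
    simpa using (((tendsto_one_sub_mul_pow_atTop h.1 h.2).comp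
      (tendsto_two_mul_add_atTop 2)).const_mul (1 + φ ω)).const_sub (φ ω)

end HetAR1

open HetAR1

theorem hetroGMM_moment_condition_first_general
    {Ω : Type*} [MeasurableSpace Ω] (P : Measure Ω)
    (φ σ : Ω → ℝ) (ε : ℤ → Ω → ℝ) (ε₀ : ℝ) (hε₀ : 0 < ε₀)
    (hφm : Measurable φ) (hφbd : ∀ᵐ ω ∂P, -1 + ε₀ ≤ φ ω ∧ φ ω ≤ 1)
    (hσm : Measurable σ)
    (hσ2 : Integrable (fun ω => (σ ω) ^ 2) P)
    (hε2 : ∀ ℓ : ℤ, MemLp (ε ℓ) 2 P)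
    (hεmean : ∀ ℓ : ℤ, ∫ ω, ε ℓ ω ∂P = 0)
    (hεvar : ∀ ℓ : ℤ, ∫ ω, (ε ℓ ω) ^ 2 ∂P = 1)
    (hindep : iIndepFun (m := HetAR1.instMeasurableSpaceCodomain) (HetAR1.family φ σ ε) P)
    (hφσ : IndepFun φ σ P)
    (Δy : ℤ → Ω → ℝ)
    (hΔ2 : ∀ t : ℤ, MemLp (Δy t) 2 P)
    (hΔL2 : ∀ t : ℤ, Tendsto (fun M : ℕ =>
        eLpNorm (fun ω => σ ω * (ε t ω -
          (1 - φ ω) * ∑ ℓ ∈ Finset.range M, φ ω ^ ℓ * ε (t - ((ℓ : ℤ) + 1)) ω)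
          - Δy t ω) 2 P)
      atTop (nhds 0)) :
    ∀ t : ℤ,
      (∫ ω, φ ω ∂P) *
          ((∫ ω, (Δy t ω) ^ 2 ∂P) + ∫ ω, Δy t ω * Δy (t - 1) ω ∂P) =
        (∫ ω, (Δy t ω) ^ 2 ∂P) + 2 * (∫ ω, Δy t ω * Δy (t - 1) ω ∂P) +
          ∫ ω, Δy t ω * Δy (t - 2) ω ∂P := by
  intro t
  have hφ1 : ∀ᵐ ω ∂P, -1 < φ ω ∧ φ ω ≤ 1 := hφbd.mono fun ω h => ⟨by linarith [h.1], h.2⟩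
  have habs : ∀ᵐ ω ∂P, |φ ω| ≤ 1 := hφ1.mono fun ω h => abs_le.2 ⟨h.1.le, h.2⟩
  have hmemLp := memLp_truncDiff hindep hφm hσm habs hσ2 hε2
  have hlag : ∀ d : ℕ, Tendsto (fun N : ℕ => ∫ ω, σ ω ^ 2 * lagSum (φ ω) (N + 2) d ∂P) atTop
      (𝓝 (∫ ω, Δy t ω * Δy (t - d) ω ∂P)) := fun d => by
    have hconv : ∀ s, Tendsto (fun M => eLpNorm (fun ω => truncDiff φ σ ε s M ω - Δy s ω) 2 P)
        atTop (𝓝 0) := fun s => by simpa only [truncDiff_eq] using hΔL2 s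
    simpa only [integral_truncDiff_mul_truncDiff hindep hφm hσm habs hσ2 hε2 hεmean hεvar,
      Function.comp_def] using
      (tendsto_integral_mul_of_tendsto_eLpNorm (hΔ2 t) (hΔ2 (t - d)) (hmemLp t) (hmemLp (t - d))
        (hconv t) (hconv (t - d))).comp (tendsto_add_atTop_nat 2)
  have hlag01 : (∫ ω, Δy t ω ^ 2 ∂P) + ∫ ω, Δy t ω * Δy (t - 1) ω ∂P = ∫ ω, σ ω ^ 2 ∂P :=
    tendsto_nhds_unique (by simpa [sq] using (hlag 0).add (hlag 1))
      (tendsto_integral_lag_zero_add_lag_one hσ2 hφm hφ1)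
  have hlag012 : (∫ ω, Δy t ω ^ 2 ∂P) + 2 * (∫ ω, Δy t ω * Δy (t - 1) ω ∂P)
      + ∫ ω, Δy t ω * Δy (t - 2) ω ∂P = ∫ ω, σ ω ^ 2 * φ ω ∂P :=
    tendsto_nhds_unique (by simpa [sq] using ((hlag 0).add ((hlag 1).const_mul 2)).add (hlag 2))
      (tendsto_integral_lag_zero_add_two_mul_lag_one_add_lag_two hσ2 hφm hφ1)
  have hσφ : ∫ ω, σ ω ^ 2 * φ ω ∂P = (∫ ω, σ ω ^ 2 ∂P) * ∫ ω, φ ω ∂P :=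
    (hφσ.symm.comp (measurable_id.pow_const 2) measurable_id).integral_fun_mul_eq_mul_integral
      hσ2.1 hφm.aestronglyMeasurable
  rw [hlag01, hlag012, hσφ, mul_comm]

/-- (Moment condition underlying the HetroGMM estimator of the first moment)
For every `t ∈ ℤ`,
`E(φ) (E((Δy_t)²) + E(Δy_t Δy_{t−1})) = E((Δy_t)²) + 2 E(Δy_t Δy_{t−1}) + E(Δy_t Δy_{t−2})`. -/
theorem hetroGMM_moment_condition_first
    {Ω : Type*} [MeasurableSpace Ω] (P : Measure Ω) [IsProbabilityMeasure P]
    (φ σ : Ω → ℝ) (ε : ℤ → Ω → ℝ) (ε₀ : ℝ) (hε₀ : 0 < ε₀)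
    (hφm : Measurable φ) (hφbd : ∀ᵐ ω ∂P, -1 + ε₀ ≤ φ ω ∧ φ ω ≤ 1)
    (hσm : Measurable σ) (hσ0 : ∀ ω, 0 ≤ σ ω)
    (hσ2 : Integrable (fun ω => (σ ω) ^ 2) P)
    (hε2 : ∀ ℓ : ℤ, MemLp (ε ℓ) 2 P)
    (hεmean : ∀ ℓ : ℤ, ∫ ω, ε ℓ ω ∂P = 0)
    (hεvar : ∀ ℓ : ℤ, ∫ ω, (ε ℓ ω) ^ 2 ∂P = 1)
    (hindep : iIndepFun (m := HetAR1.instMeasurableSpaceCodomain) (HetAR1.family φ σ ε) P)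
    (hφσ : IndepFun φ σ P)
    (Δy : ℤ → Ω → ℝ)
    (hΔ2 : ∀ t : ℤ, MemLp (Δy t) 2 P)
    (hΔrep : ∀ t : ℤ, ∀ᵐ ω ∂P,
      (Summable fun ℓ : ℕ => |φ ω ^ ℓ * ε (t - ((ℓ : ℤ) + 1)) ω|) ∧
      Δy t ω = σ ω * (ε t ω -
        (1 - φ ω) * ∑' ℓ : ℕ, φ ω ^ ℓ * ε (t - ((ℓ : ℤ) + 1)) ω))
    (hΔL2 : ∀ t : ℤ, Tendsto (fun M : ℕ =>
        eLpNorm (fun ω => σ ω * (ε t ω -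
          (1 - φ ω) * ∑ ℓ ∈ Finset.range M, φ ω ^ ℓ * ε (t - ((ℓ : ℤ) + 1)) ω)
          - Δy t ω) 2 P)
      atTop (nhds 0)) :
    ∀ t : ℤ,
      (∫ ω, φ ω ∂P) *
          ((∫ ω, (Δy t ω) ^ 2 ∂P) + ∫ ω, Δy t ω * Δy (t - 1) ω ∂P) =
        (∫ ω, (Δy t ω) ^ 2 ∂P) + 2 * (∫ ω, Δy t ω * Δy (t - 1) ω ∂P) +
          ∫ ω, Δy t ω * Δy (t - 2) ω ∂P :=
  hetroGMM_moment_condition_first_general P φ σ ε ε₀ hε₀ hφm hφbd hσm hσ2 hε2 hεmean hεvar hindep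
    hφσ Δy hΔ2 hΔL2
end
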